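/- A map A : F^d → F^d is both a Poincaré similarity and a Galilean similarity if and only if A is a trivial Euclidean similarity. -/

import Mathlib

namespace Spacetimes

open Finset

variable {F : Type*} [Field F] [LinearOrder F] [IsStrictOrderedRing F] {d : ℕ}

/-- The Euclidean scalar product on `Fin d → F`. -/
def euclProd (p q : Fin d → F) : F := ∑ i, p i * q i

/-- The Minkowski product on `Fin d → F`; index `0` is the time coordinate. -/
def minkProd [NeZero d] (p q : Fin d → F) : F :=
  p 0 * q 0 - ∑ i ∈ Finset.univ.erase (0 : Fin d), p i * q i

/-- The squared distance function associated to a product `B`. -/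
def sqDist (B : (Fin d → F) → (Fin d → F) → F) (p q : Fin d → F) : F :=
  B (p - q) (p - q)

/-- An affine transformation: a linear bijection composed with a translation. -/
def IsAffine (A : (Fin d → F) → (Fin d → F)) : Prop :=
  ∃ (L : (Fin d → F) ≃ₗ[F] (Fin d → F)) (t : Fin d → F), ∀ p, A p = L p + t

/-- A Euclidean similarity: an affine transformation scaling squared
Euclidean distances by a constant factor. -/
def EuclSim (A : (Fin d → F) → (Fin d → F)) : Prop :=
  IsAffine A ∧ ∃ a : F, ∀ p q : Fin d → F,
    sqDist euclProd (A p) (A q) = a * sqDist euclProd p q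

/-- A Poincaré similarity: an affine transformation scaling squared
Minkowski distances by a constant factor. -/
def PoiSim [NeZero d] (A : (Fin d → F) → (Fin d → F)) : Prop :=
  IsAffine A ∧ ∃ a : F, ∀ p q : Fin d → F,
    sqDist minkProd (A p) (A q) = a * sqDist minkProd p q

/-- A Galilean similarity. -/
def GalSim [NeZero d] (A : (Fin d → F) → (Fin d → F)) : Prop :=
  IsAffine A ∧ ∃ a : F, ∀ p q : Fin d → F, p 0 = q 0 →
    A p 0 = A q 0 ∧ sqDist euclProd (A p) (A q) = a * sqDist euclProd p q

/-- A map respects a binary relation. -/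
def Respects2 {α : Type*} (f : α → α) (R : α → α → Prop) : Prop :=
  ∀ p q, R p q ↔ R (f p) (f q)

/-- A map respects a ternary relation. -/
def Respects3 {α : Type*} (f : α → α) (R : α → α → α → Prop) : Prop :=
  ∀ p q r, R p q r ↔ R (f p) (f q) (f r)

/-- A map respects a 4-ary relation. -/
def Respects4 {α : Type*} (f : α → α) (R : α → α → α → α → Prop) : Prop :=
  ∀ p q r s, R p q r s ↔ R (f p) (f q) (f r) (f s)

/-- Absolute simultaneity. -/
def SimRel [NeZero d] (p q : Fin d → F) : Prop := p 0 = q 0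

/-- Being at rest (same spatial components). -/
def RestRel [NeZero d] (p q : Fin d → F) : Prop := ∀ i, i ≠ 0 → p i = q i

/-- A trivial Euclidean similarity: a Euclidean similarity respecting `RestRel`. -/
def TrivEuclSim [NeZero d] (A : (Fin d → F) → (Fin d → F)) : Prop :=
  EuclSim A ∧ Respects2 A RestRel

/-- A trivial Galilean similarity: a Galilean similarity respecting `RestRel`. -/
def TrivGalSim [NeZero d] (A : (Fin d → F) → (Fin d → F)) : Prop :=
  GalSim A ∧ Respects2 A RestRel

/-- Betweenness. -/
def Bw (p q r : Fin d → F) : Prop :=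
  ∃ l : F, 0 ≤ l ∧ l ≤ 1 ∧ q = p + l • (r - p)

/-- Lightlike relatedness. -/
def Light [NeZero d] (p q : Fin d → F) : Prop :=
  (p 0 - q 0) ^ 2 = ∑ i ∈ Finset.univ.erase (0 : Fin d), (p i - q i) ^ 2

/-- Euclidean congruence of segments. -/
def CongE (p q r s : Fin d → F) : Prop :=
  sqDist euclProd p q = sqDist euclProd r s

/-- Minkowski congruence of segments. -/
def CongM [NeZero d] (p q r s : Fin d → F) : Prop :=
  sqDist minkProd p q = sqDist minkProd r s

/-- Congruence on simultaneity. -/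
def CongS [NeZero d] (p q r s : Fin d → F) : Prop :=
  CongE p q r s ∧ SimRel p q ∧ SimRel r s

/-- The time axis. -/
def timeAxis (F : Type*) [Field F] [LinearOrder F] [IsStrictOrderedRing F] (d : ℕ) [NeZero d] :
    Set (Fin d → F) := {p | ∀ i, i ≠ 0 → p i = 0}

/-- The simultaneity at the origin. -/
def simul0 (F : Type*) [Field F] [LinearOrder F] [IsStrictOrderedRing F] (d : ℕ) [NeZero d] :
    Set (Fin d → F) := {p | p 0 = 0}

/-- The `i`-th standard unit vector. -/
def unitVec (F : Type*) [Field F] [LinearOrder F] [IsStrictOrderedRing F] {d : ℕ} (i : Fin d) : Fin d → F :=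
  Pi.single i 1

end Spacetimes

/-!
Both sides say the same about the linear part `L` of `A` (`IsSplitSim L α`): `L e₀ = α • e₀` for
the time unit vector `e₀`, and `L` maps the hyperplane `simul0` into itself with ratio `α²`.
Splitting `v = v₀ e₀ + s` with `s ∈ simul0`, such an `L` scales squared Euclidean and Minkowski
lengths alike by `α²` and preserves both `simul0` and the time axis.

For a trivial Euclidean similarity, `L e₀` lies on the time axis, and `L` preserves Euclidean
orthogonality to it, i.e. preserves `simul0 = e₀ᗮ`. For a Poincaré and Galilean similarity, `L`
maps `simul0` into, hence (being invertible) onto itself; as `simul0` is also the Minkowski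
orthogonal complement of `e₀`, `L e₀` is orthogonal to `simul0`, i.e. on the time axis. The two
ratios agree because both are read off a spatial unit vector, which exists as `2 ≤ d`.
-/

lemma apply_map_map_of_forall_self {F V : Type*} [Field F] [CharZero F] [AddCommGroup V]
    [Module F V] {B : V → V → F} (hB : ∀ u v, B (u + v) (u + v) = B u u + 2 * B u v + B v v)
    (L : V →ₗ[F] V) {a : F} (h : ∀ v, B (L v) (L v) = a * B v v) (u v : V) :
    B (L u) (L v) = a * B u v := by
  have huv := h (u + v)
  rw [map_add, hB, hB] at huv
  linear_combination (huv - h u - h v) / 2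

lemma dotProduct_add_self {R n : Type*} [CommRing R] [Fintype n] (u v : n → R) :
    (u + v) ⬝ᵥ (u + v) = u ⬝ᵥ u + 2 * u ⬝ᵥ v + v ⬝ᵥ v := by
  simp only [add_dotProduct, dotProduct_add, dotProduct_comm v u]
  ring

namespace Spacetimes

section Field

variable {F : Type*} [Field F] {d : ℕ}

lemma euclProd_eq_dotProduct (p q : Fin d → F) : euclProd p q = p ⬝ᵥ q := rfl

section

variable {A : (Fin d → F) → (Fin d → F)} {L : (Fin d → F) ≃ₗ[F] (Fin d → F)} {t : Fin d → F}

lemma sub_eq_map_sub (hA : ∀ p, A p = L p + t) (p q : Fin d → F) : A p - A q = L (p - q) := by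
  rw [hA, hA, map_sub]
  abel

lemma forall_sqDist_eq_iff (hA : ∀ p, A p = L p + t) (B : (Fin d → F) → (Fin d → F) → F)
    (a : F) :
    (∀ p q, sqDist B (A p) (A q) = a * sqDist B p q) ↔ ∀ v, B (L v) (L v) = a * B v v := by
  refine ⟨fun h v => by simpa [sqDist, sub_eq_map_sub hA] using h v 0, fun h p q => ?_⟩
  rw [sqDist, sqDist, sub_eq_map_sub hA]
  exact h _

end

variable [NeZero d]

lemma minkProd_eq (p q : Fin d → F) : minkProd p q = 2 * (p 0 * q 0) - p ⬝ᵥ q := by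
  unfold minkProd dotProduct
  rw [← Finset.sum_erase_add _ _ (Finset.mem_univ (0 : Fin d))]
  ring

lemma minkProd_add_self (u v : Fin d → F) :
    minkProd (u + v) (u + v) = minkProd u u + 2 * minkProd u v + minkProd v v := by
  simp only [minkProd_eq, Pi.add_apply, dotProduct_add_self]
  ring

end Field

variable {F : Type*} [Field F] [LinearOrder F] [IsStrictOrderedRing F] {d : ℕ}

lemma unitVec_apply_self (i : Fin d) : unitVec F i i = 1 := Pi.single_eq_same i 1

lemma dotProduct_unitVec (v : Fin d → F) (i : Fin d) : v ⬝ᵥ unitVec F i = v i := by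
  rw [unitVec, dotProduct_single, mul_one]

section Coordinates

variable [NeZero d]

lemma minkProd_of_mem_simul0_right {p q : Fin d → F} (hq : q ∈ simul0 F d) :
    minkProd p q = -(p ⬝ᵥ q) := by
  rw [minkProd_eq, show q 0 = 0 from hq]
  ring

lemma unitVec_mem_simul0 {i : Fin d} (hi : i ≠ 0) : unitVec F i ∈ simul0 F d :=
  Pi.single_eq_of_ne hi.symm 1

lemma unitVec_zero_mem_timeAxis : unitVec F 0 ∈ timeAxis F d :=
  fun _ hi => Pi.single_eq_of_ne hi 1

lemma sub_smul_unitVec_zero_mem_simul0 (v : Fin d → F) : v - v 0 • unitVec F 0 ∈ simul0 F d := by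
  simp [simul0, unitVec_apply_self]

lemma mem_timeAxis_iff {v : Fin d → F} : v ∈ timeAxis F d ↔ v - v 0 • unitVec F 0 = 0 := by
  refine ⟨fun hv => funext fun i => ?_, fun hv i hi => ?_⟩
  · rcases eq_or_ne i 0 with rfl | hi
    · exact sub_smul_unitVec_zero_mem_simul0 v
    · simp [hv i hi, unitVec, Pi.single_eq_of_ne hi]
  · simpa [unitVec, Pi.single_eq_of_ne hi] using congrFun hv i

lemma mem_timeAxis_of_forall_dotProduct_eq_zero {v : Fin d → F}
    (h : ∀ s ∈ simul0 F d, v ⬝ᵥ s = 0) : v ∈ timeAxis F d := fun i hi => by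
  simpa [dotProduct_unitVec] using h _ (unitVec_mem_simul0 hi)

lemma dotProduct_self_smul_unitVec_zero_add (c : F) {s : Fin d → F} (hs : s ∈ simul0 F d) :
    (c • unitVec F 0 + s) ⬝ᵥ (c • unitVec F 0 + s) = c ^ 2 + s ⬝ᵥ s := by
  have hs0 : s ⬝ᵥ unitVec F 0 = 0 := (dotProduct_unitVec s 0).trans hs
  simp only [add_dotProduct, dotProduct_add, smul_dotProduct, dotProduct_smul,
    dotProduct_unitVec, unitVec_apply_self, hs0, dotProduct_comm (unitVec F 0) s, smul_eq_mul]
  ring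

end Coordinates

section Linear

variable [NeZero d] {L : (Fin d → F) ≃ₗ[F] (Fin d → F)} {α : F}

structure IsSplitSim (L : (Fin d → F) ≃ₗ[F] (Fin d → F)) (α : F) : Prop where
  map_unitVec_zero : L (unitVec F 0) = α • unitVec F 0
  mapsTo_simul0 : ∀ v ∈ simul0 F d, L v ∈ simul0 F d
  dotProduct_map_self_of_mem_simul0 : ∀ v ∈ simul0 F d, L v ⬝ᵥ L v = α ^ 2 * v ⬝ᵥ v

namespace IsSplitSim

lemma map_eq (h : IsSplitSim L α) (v : Fin d → F) :
    L v = (α * v 0) • unitVec F 0 + L (v - v 0 • unitVec F 0) := by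
  rw [map_sub, map_smul, h.map_unitVec_zero, smul_smul, mul_comm]
  abel

lemma map_apply_zero (h : IsSplitSim L α) (v : Fin d → F) : L v 0 = α * v 0 := by
  have hs : L (v - v 0 • unitVec F 0) 0 = 0 :=
    h.mapsTo_simul0 _ (sub_smul_unitVec_zero_mem_simul0 v)
  rw [h.map_eq v, Pi.add_apply, hs, Pi.smul_apply, unitVec_apply_self, smul_eq_mul, mul_one,
    add_zero]

lemma dotProduct_map_self (h : IsSplitSim L α) (v : Fin d → F) :
    L v ⬝ᵥ L v = α ^ 2 * v ⬝ᵥ v := by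
  have hs := sub_smul_unitVec_zero_mem_simul0 v
  have hv : v = v 0 • unitVec F 0 + (v - v 0 • unitVec F 0) := by abel
  rw [h.map_eq, dotProduct_self_smul_unitVec_zero_add _ (h.mapsTo_simul0 _ hs),
    h.dotProduct_map_self_of_mem_simul0 _ hs]
  conv_rhs => rw [hv, dotProduct_self_smul_unitVec_zero_add _ hs]
  ring

lemma minkProd_map_self (h : IsSplitSim L α) (v : Fin d → F) :
    minkProd (L v) (L v) = α ^ 2 * minkProd v v := by
  rw [minkProd_eq, minkProd_eq, h.map_apply_zero, h.dotProduct_map_self]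
  ring

lemma map_mem_timeAxis_iff (h : IsSplitSim L α) {v : Fin d → F} :
    L v ∈ timeAxis F d ↔ v ∈ timeAxis F d := by
  have hL : L (v - v 0 • unitVec F 0) = L v - L v 0 • unitVec F 0 := by
    rw [map_sub, map_smul, h.map_unitVec_zero, smul_smul, h.map_apply_zero, mul_comm]
  rw [mem_timeAxis_iff, mem_timeAxis_iff, ← hL, L.map_eq_zero_iff]

end IsSplitSim

lemma isSplitSim_of_dotProduct_of_mem_timeAxis {a : F}
    (hE : ∀ v, L v ⬝ᵥ L v = a * v ⬝ᵥ v) (hT : L (unitVec F 0) ∈ timeAxis F d) :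
    IsSplitSim L (L (unitVec F 0) 0) := by
  set α := L (unitVec F 0) 0
  have he₀ : L (unitVec F 0) = α • unitVec F 0 := sub_eq_zero.mp (mem_timeAxis_iff.mp hT)
  have hα : α ≠ 0 := by
    rintro hα
    rw [hα, zero_smul, L.map_eq_zero_iff] at he₀
    simpa [unitVec_apply_self] using congrFun he₀ 0
  have ha : a = α ^ 2 := by
    have := hE (unitVec F 0)
    simp only [he₀, dotProduct_smul, smul_dotProduct, dotProduct_unitVec, unitVec_apply_self,
      smul_eq_mul] at this
    linear_combination -this
  refine ⟨he₀, fun v hv => ?_, fun v _ => ha ▸ hE v⟩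
  -- `L` preserves Euclidean orthogonality to `e₀`, which cuts out `simul0`.
  have := apply_map_map_of_forall_self dotProduct_add_self L.toLinearMap hE v (unitVec F 0)
  simp only [LinearEquiv.coe_coe, he₀, dotProduct_smul, dotProduct_unitVec, smul_eq_mul] at this
  rw [show v 0 = 0 from hv, mul_zero] at this
  exact (mul_eq_zero.mp this).resolve_left hα

lemma map_apply_zero_of_mapsTo_simul0 (hS : ∀ v ∈ simul0 F d, L v ∈ simul0 F d)
    (v : Fin d → F) : L v 0 = v 0 * L (unitVec F 0) 0 := by
  have hs : L (v - v 0 • unitVec F 0) 0 = 0 := hS _ (sub_smul_unitVec_zero_mem_simul0 v)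
  rw [map_sub, map_smul, Pi.sub_apply, Pi.smul_apply, smul_eq_mul, sub_eq_zero] at hs
  exact hs

lemma map_unitVec_zero_apply_zero_ne_zero (hS : ∀ v ∈ simul0 F d, L v ∈ simul0 F d) :
    L (unitVec F 0) 0 ≠ 0 := by
  intro h
  have := map_apply_zero_of_mapsTo_simul0 hS (L.symm (unitVec F 0))
  rw [L.apply_symm_apply, unitVec_apply_self, h, mul_zero] at this
  exact one_ne_zero this

lemma symm_mapsTo_simul0 (hS : ∀ v ∈ simul0 F d, L v ∈ simul0 F d) :
    ∀ w ∈ simul0 F d, L.symm w ∈ simul0 F d := by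
  intro w hw
  have := map_apply_zero_of_mapsTo_simul0 hS (L.symm w)
  rw [L.apply_symm_apply, show w 0 = 0 from hw, eq_comm] at this
  exact (mul_eq_zero.mp this).resolve_right (map_unitVec_zero_apply_zero_ne_zero hS)

lemma map_unitVec_zero_mem_timeAxis {a : F}
    (hM : ∀ v, minkProd (L v) (L v) = a * minkProd v v)
    (hS : ∀ v ∈ simul0 F d, L v ∈ simul0 F d) : L (unitVec F 0) ∈ timeAxis F d := by
  refine mem_timeAxis_of_forall_dotProduct_eq_zero fun s hs => ?_
  -- `e₀` is Minkowski-orthogonal to `simul0`, and `L` maps `simul0` onto itself.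
  have hz := symm_mapsTo_simul0 hS s hs
  have := apply_map_map_of_forall_self minkProd_add_self L.toLinearMap hM
    (unitVec F 0) (L.symm s)
  rw [LinearEquiv.coe_coe, L.apply_symm_apply, minkProd_of_mem_simul0_right hs,
    minkProd_of_mem_simul0_right hz, dotProduct_comm (unitVec F 0), dotProduct_unitVec,
    show L.symm s 0 = 0 from hz] at this
  simpa using this

lemma ratio_eq_of_minkProd_of_simul0 (hd : 2 ≤ d) {a b : F}
    (hM : ∀ v, minkProd (L v) (L v) = a * minkProd v v)
    (hS : ∀ v ∈ simul0 F d, L v ∈ simul0 F d ∧ L v ⬝ᵥ L v = b * v ⬝ᵥ v) : b = a := by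
  have hi : (⟨1, hd⟩ : Fin d) ≠ 0 := by simp [Fin.ext_iff]
  have he := unitVec_mem_simul0 (F := F) hi
  have := hM (unitVec F ⟨1, hd⟩)
  rw [minkProd_of_mem_simul0_right (hS _ he).1, (hS _ he).2, minkProd_of_mem_simul0_right he,
    dotProduct_unitVec, unitVec_apply_self] at this
  linear_combination -this

lemma isSplitSim_of_minkProd_of_simul0 (hd : 2 ≤ d) {a b : F}
    (hM : ∀ v, minkProd (L v) (L v) = a * minkProd v v)
    (hS : ∀ v ∈ simul0 F d, L v ∈ simul0 F d ∧ L v ⬝ᵥ L v = b * v ⬝ᵥ v) :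
    IsSplitSim L (L (unitVec F 0) 0) := by
  set α := L (unitVec F 0) 0
  have hS' : ∀ v ∈ simul0 F d, L v ∈ simul0 F d := fun v hv => (hS v hv).1
  have he₀ : L (unitVec F 0) = α • unitVec F 0 :=
    sub_eq_zero.mp (mem_timeAxis_iff.mp (map_unitVec_zero_mem_timeAxis hM hS'))
  have ha : a = α ^ 2 := by
    have := hM (unitVec F 0)
    simp only [he₀, minkProd_eq, Pi.smul_apply, smul_dotProduct, dotProduct_smul,
      dotProduct_unitVec, unitVec_apply_self, smul_eq_mul] at this
    linear_combination -this
  refine ⟨he₀, hS', fun v hv => ?_⟩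
  rw [← ha, ← ratio_eq_of_minkProd_of_simul0 hd hM hS]
  exact (hS v hv).2

end Linear

section Affine

variable [NeZero d] {A : (Fin d → F) → (Fin d → F)} {L : (Fin d → F) ≃ₗ[F] (Fin d → F)}
  {t : Fin d → F}

lemma forall_apply_zero_eq_and_sqDist_eq_iff (hA : ∀ p, A p = L p + t) (b : F) :
    (∀ p q : Fin d → F, p 0 = q 0 →
      A p 0 = A q 0 ∧ sqDist euclProd (A p) (A q) = b * sqDist euclProd p q) ↔
    ∀ v ∈ simul0 F d, L v ∈ simul0 F d ∧ L v ⬝ᵥ L v = b * v ⬝ᵥ v := by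
  have hsim : ∀ p q : Fin d → F, p 0 = q 0 ↔ p - q ∈ simul0 F d := fun p q =>
    sub_eq_zero.symm
  simp only [hsim, sqDist, sub_eq_map_sub hA, euclProd_eq_dotProduct]
  exact ⟨fun h v hv => by simpa using h v 0 (by simpa using hv), fun h p q => h (p - q)⟩

lemma respects2_restRel_iff (hA : ∀ p, A p = L p + t) :
    Respects2 A RestRel ↔ ∀ v, v ∈ timeAxis F d ↔ L v ∈ timeAxis F d := by
  have hrest : ∀ p q : Fin d → F, RestRel p q ↔ p - q ∈ timeAxis F d := fun p q =>
    forall₂_congr fun i _ => sub_eq_zero.symm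
  simp only [Respects2, hrest, sub_eq_map_sub hA]
  exact ⟨fun h v => by simpa using h v 0, fun h p q => h (p - q)⟩

namespace IsSplitSim

variable {α : F}

lemma trivEuclSim (h : IsSplitSim L α) (hA : ∀ p, A p = L p + t) : TrivEuclSim A :=
  ⟨⟨⟨L, t, hA⟩, α ^ 2, (forall_sqDist_eq_iff hA _ _).2 h.dotProduct_map_self⟩,
    (respects2_restRel_iff hA).2 fun _ => h.map_mem_timeAxis_iff.symm⟩

lemma poiSim (h : IsSplitSim L α) (hA : ∀ p, A p = L p + t) : PoiSim A :=
  ⟨⟨L, t, hA⟩, α ^ 2, (forall_sqDist_eq_iff hA _ _).2 h.minkProd_map_self⟩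

lemma galSim (h : IsSplitSim L α) (hA : ∀ p, A p = L p + t) : GalSim A :=
  ⟨⟨L, t, hA⟩, α ^ 2, (forall_apply_zero_eq_and_sqDist_eq_iff hA _).2 fun v hv =>
    ⟨h.mapsTo_simul0 v hv, h.dotProduct_map_self v⟩⟩

end IsSplitSim

end Affine

/-- the maps that are both Poincaré and Galilean similarities
are exactly the trivial Euclidean similarities. -/
theorem poiSim_and_galSim_iff_trivEuclSim [NeZero d] (hd : 2 ≤ d)
    (A : (Fin d → F) → (Fin d → F)) :
    (PoiSim A ∧ GalSim A) ↔ TrivEuclSim A := by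
  constructor
  · rintro ⟨⟨⟨L, t, hA⟩, a, hM⟩, -, b, hG⟩
    exact (isSplitSim_of_minkProd_of_simul0 hd ((forall_sqDist_eq_iff hA _ a).1 hM)
      ((forall_apply_zero_eq_and_sqDist_eq_iff hA b).1 hG)).trivEuclSim hA
  · rintro ⟨⟨⟨L, t, hA⟩, a, hE⟩, hR⟩
    have hL := isSplitSim_of_dotProduct_of_mem_timeAxis ((forall_sqDist_eq_iff hA _ a).1 hE)
      (((respects2_restRel_iff hA).1 hR _).1 unitVec_zero_mem_timeAxis)
    exact ⟨hL.poiSim hA, hL.galSim hA⟩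

end Spacetimes
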